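/- arXiv:2501.13218 — 2 statements merged into one kernel-verified Lean document; each statement's English description precedes it below -/
import Mathlib

section
/- Let δ_L < δ_U be real numbers, let δ ∈ ℝ, Λ > 0, and z ∈ ℝ. Define τ : (0,∞) → ℝ by τ(c) = Φ(√(c/Λ)·(δ_U − δ) − z) − Φ(√(c/Λ)·(δ_L − δ) − z). Then the derivative of the map c ↦ logit(τ(c)) converges, as c → ∞, to (1/2 − 𝟙{δ ∉ (δ_L, δ_U)}) · min{(δ_U − δ)²/Λ, (δ_L − δ)²/Λ}, where 𝟙{δ ∉ (δ_L, δ_U)} equals 1 if δ lies outside the open interval (δ_L, δ_U) and 0 otherwise. -/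
open Filter Set

/-- The standard normal cumulative distribution function. -/
noncomputable def Phi (x : ℝ) : ℝ :=
  (2 * Real.pi) ^ (-(1 : ℝ) / 2) * ∫ t in Set.Iic x, Real.exp (-t ^ 2 / 2)

/-- The logit function, `logit x = log x - log (1 - x)`. -/
noncomputable def logit (x : ℝ) : ℝ := Real.log x - Real.log (1 - x)

namespace GaussAux

noncomputable def K : ℝ := (2 * Real.pi) ^ (-(1 : ℝ) / 2)

noncomputable def g (x : ℝ) : ℝ := Real.exp (-x ^ 2 / 2)

noncomputable def phi (x : ℝ) : ℝ := K * g x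

lemma K_pos : 0 < K := Real.rpow_pos_of_pos (by positivity) _

lemma g_pos (x : ℝ) : 0 < g x := Real.exp_pos _

lemma phi_pos (x : ℝ) : 0 < phi x := mul_pos K_pos (g_pos x)

lemma g_eq : g = fun x => Real.exp (-(1/2 : ℝ) * x ^ 2) := by
  funext x; unfold g; ring_nf

lemma integrable_g : MeasureTheory.Integrable g := by
  rw [g_eq]; exact integrable_exp_neg_mul_sq (by norm_num)

lemma integral_g : ∫ x : ℝ, g x = Real.sqrt (2 * Real.pi) := by
  rw [g_eq]
  rw [show (fun x : ℝ => Real.exp (-(1/2 : ℝ) * x ^ 2)) = fun x : ℝ => Real.exp (-(1/2 : ℝ) * x ^ 2) from rfl]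
  have := integral_gaussian (1/2 : ℝ)
  rw [this]
  norm_num
  rw [mul_comm]

lemma K_mul_integral : K * ∫ x : ℝ, g x = 1 := by
  rw [integral_g]
  unfold K
  rw [Real.sqrt_eq_rpow]
  rw [← Real.rpow_add (by positivity)]
  norm_num

lemma Phi_eq (x : ℝ) : Phi x = K * ∫ t in Iic x, g t := rfl

lemma Phi_split (x : ℝ) :
    Phi x = K * (∫ t in Iic (0:ℝ), g t) + K * ∫ t in (0:ℝ)..x, g t := by
  rw [Phi_eq, ← intervalIntegral.integral_Iic_sub_Iic integrable_g.integrableOn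
    integrable_g.integrableOn]
  ring

lemma hasDerivAt_Phi (x : ℝ) : HasDerivAt Phi (phi x) x := by
  have h : HasDerivAt (fun u => ∫ t in (0:ℝ)..u, g t) (g x) x := by
    refine intervalIntegral.integral_hasDerivAt_right
      (integrable_g.intervalIntegrable) ?_ ?_
    · exact integrable_g.1.stronglyMeasurableAtFilter
    · exact (Real.continuous_exp.comp (by continuity)).continuousAt
  have h2 : HasDerivAt (fun u => K * (∫ t in Iic (0:ℝ), g t) + K * ∫ t in (0:ℝ)..u, g t)
      (K * g x) x := ((h.const_mul K).const_add _)
  have : Phi = fun u => K * (∫ t in Iic (0:ℝ), g t) + K * ∫ t in (0:ℝ)..u, g t := by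
    funext u; exact Phi_split u
  rw [this]; exact h2

lemma Phi_tendsto_atTop : Tendsto Phi atTop (nhds 1) := by
  have h : Tendsto (fun x : ℝ => ∫ t in (0:ℝ)..x, g t) atTop
      (nhds (∫ t in Ioi (0:ℝ), g t)) :=
    MeasureTheory.intervalIntegral_tendsto_integral_Ioi 0 integrable_g.integrableOn tendsto_id
  have h2 : Tendsto Phi atTop
      (nhds (K * (∫ t in Iic (0:ℝ), g t) + K * (∫ t in Ioi (0:ℝ), g t))) := by
    have := ((h.const_mul K).const_add (K * (∫ t in Iic (0:ℝ), g t)))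
    refine this.congr (fun x => (Phi_split x).symm)
  have he : K * (∫ t in Iic (0:ℝ), g t) + K * (∫ t in Ioi (0:ℝ), g t) = 1 := by
    rw [← mul_add, intervalIntegral.integral_Iic_add_Ioi integrable_g.integrableOn
      integrable_g.integrableOn]
    exact K_mul_integral
  rwa [he] at h2

lemma Phi_tendsto_atBot : Tendsto Phi atBot (nhds 0) := by
  have h : Tendsto (fun x : ℝ => ∫ t in x..(0:ℝ), g t) atBot
      (nhds (∫ t in Iic (0:ℝ), g t)) :=
    MeasureTheory.intervalIntegral_tendsto_integral_Iic 0 integrable_g.integrableOn tendsto_id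
  have h2 : Tendsto Phi atBot (nhds (K * (∫ t in Iic (0:ℝ), g t) +
      K * (-(∫ t in Iic (0:ℝ), g t)))) := by
    have := (((h.neg).const_mul K).const_add (K * (∫ t in Iic (0:ℝ), g t)))
    refine this.congr (fun x => ?_)
    rw [Phi_split x, intervalIntegral.integral_symm]
    ring_nf
  simpa using h2

lemma strictMono_Phi : StrictMono Phi := by
  apply strictMono_of_deriv_pos
  intro x
  rw [(hasDerivAt_Phi x).deriv]
  exact phi_pos x

lemma Phi_lt_one (x : ℝ) : Phi x < 1 := by
  have h1 : Phi x < Phi (x + 1) := strictMono_Phi (by linarith)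
  have h2 : Phi (x + 1) ≤ 1 :=
    strictMono_Phi.monotone.ge_of_tendsto Phi_tendsto_atTop (x + 1)
  linarith

lemma Phi_pos (x : ℝ) : 0 < Phi x := by
  have h1 : Phi (x - 1) < Phi x := strictMono_Phi (by linarith)
  have h2 : 0 ≤ Phi (x - 1) :=
    strictMono_Phi.monotone.le_of_tendsto Phi_tendsto_atBot (x - 1)
  linarith

lemma one_sub_Phi (x : ℝ) : 1 - Phi x = K * ∫ t in Ioi x, g t := by
  have := intervalIntegral.integral_Iic_add_Ioi (b := x) (f := g)
    integrable_g.integrableOn integrable_g.integrableOn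
  have h2 : K * (∫ t in Iic x, g t) + K * (∫ t in Ioi x, g t) = 1 := by
    rw [← mul_add, this]; exact K_mul_integral
  rw [Phi_eq]; linarith

lemma Phi_neg (x : ℝ) : Phi (-x) = 1 - Phi x := by
  have h1 : (∫ t in Iic (-x), g t) = ∫ t in Ioi x, g t := by
    have : (∫ t in Iic (-x), g (-t)) = ∫ t in Ioi x, g t := by
      rw [integral_comp_neg_Iic]; norm_num
    rw [← this]
    apply MeasureTheory.setIntegral_congr_fun measurableSet_Iic
    intro t _
    unfold g; ring_nf
  rw [one_sub_Phi, Phi_eq, h1]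

lemma tendsto_g_atTop : Tendsto g atTop (nhds 0) := by
  have h : Tendsto (fun t : ℝ => -t ^ 2 / 2) atTop atBot := by
    apply Tendsto.atBot_div_const (by norm_num)
    exact tendsto_neg_atBot_iff.mpr (tendsto_pow_atTop (by norm_num))
  exact Real.tendsto_exp_atBot.comp h

lemma hasDerivAt_g (t : ℝ) : HasDerivAt g (-t * g t) t := by
  have h1 : HasDerivAt (fun t : ℝ => -t ^ 2 / 2) (-t) t := by
    have := ((hasDerivAt_pow 2 t).neg).div_const 2
    simpa using this.congr_deriv (by ring)
  have := h1.exp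
  unfold g; simpa [g, mul_comm] using this

lemma integral_Ioi_mul_g {x : ℝ} (hx : 0 < x) : ∫ t in Ioi x, t * g t = g x := by
  have hd : ∀ t ∈ Ioi x, HasDerivAt (fun u => -g u) (t * g t) t := by
    intro t _
    exact (hasDerivAt_g t).neg.congr_deriv (by ring)
  have hpos : ∀ t ∈ Ioi x, 0 ≤ t * g t := fun t ht =>
    mul_nonneg (le_of_lt (lt_trans hx ht)) (g_pos t).le
  have hlim : Tendsto (fun u => -g u) atTop (nhds 0) := by
    simpa using tendsto_g_atTop.neg
  have := MeasureTheory.integral_Ioi_of_hasDerivAt_of_nonneg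
    ((hasDerivAt_g x).neg.continuousAt.continuousWithinAt) hd hpos hlim
  simpa using this

lemma integrableOn_mul_g {x : ℝ} (hx : 0 < x) :
    MeasureTheory.IntegrableOn (fun t => t * g t) (Ioi x) := by
  have hd : ∀ t ∈ Ioi x, HasDerivAt (fun u => -g u) (t * g t) t := by
    intro t _
    exact (hasDerivAt_g t).neg.congr_deriv (by ring)
  have hpos : ∀ t ∈ Ioi x, 0 ≤ t * g t := fun t ht =>
    mul_nonneg (le_of_lt (lt_trans hx ht)) (g_pos t).le
  have hlim : Tendsto (fun u => -g u) atTop (nhds 0) := by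
    simpa using tendsto_g_atTop.neg
  exact MeasureTheory.integrableOn_Ioi_deriv_of_nonneg
    ((hasDerivAt_g x).neg.continuousAt.continuousWithinAt) hd hpos hlim

lemma tail_upper {x : ℝ} (hx : 0 < x) : 1 - Phi x ≤ phi x / x := by
  rw [one_sub_Phi]
  have h1 : (∫ t in Ioi x, g t) ≤ ∫ t in Ioi x, (t / x) * g t := by
    apply MeasureTheory.setIntegral_mono_on integrable_g.integrableOn
    · exact MeasureTheory.IntegrableOn.congr_fun ((integrableOn_mul_g hx).div_const x)
        (fun t _ => by ring) measurableSet_Ioi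
    · exact measurableSet_Ioi
    · intro t ht
      have h2 : (1 : ℝ) ≤ t / x := (one_le_div hx).2 (le_of_lt ht)
      nlinarith [g_pos t]
  have h2 : (∫ t in Ioi x, (t / x) * g t) = g x / x := by
    rw [show (fun t => (t / x) * g t) = fun t => (1/x) * (t * g t) from by funext t; ring]
    rw [MeasureTheory.integral_const_mul, integral_Ioi_mul_g hx]
    ring
  calc K * (∫ t in Ioi x, g t) ≤ K * (g x / x) :=
        mul_le_mul_of_nonneg_left (h1.trans h2.le) K_pos.le
    _ = phi x / x := by unfold phi; ring

noncomputable def hfun (t : ℝ) : ℝ := t / (t ^ 2 + 1) * g t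

lemma hasDerivAt_hfun (t : ℝ) :
    HasDerivAt hfun ((1 - 2 * t ^ 2 - t ^ 4) / (t ^ 2 + 1) ^ 2 * g t) t := by
  have hden : (t ^ 2 + 1 : ℝ) ≠ 0 := by positivity
  have h1 : HasDerivAt (fun u : ℝ => u / (u ^ 2 + 1))
      ((1 * (t ^ 2 + 1) - t * (2 * t)) / (t ^ 2 + 1) ^ 2) t := by
    have hu : HasDerivAt (fun u : ℝ => u) 1 t := hasDerivAt_id t
    have hv : HasDerivAt (fun u : ℝ => u ^ 2 + 1) (2 * t) t := by
      simpa using ((hasDerivAt_pow 2 t).add_const 1)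
    exact hu.div hv hden
  have := h1.mul (hasDerivAt_g t)
  refine this.congr_deriv ?_
  field_simp
  ring

lemma hfun_tendsto : Tendsto hfun atTop (nhds 0) := by
  have hb : ∀ᶠ t : ℝ in atTop, |hfun t| ≤ g t := by
    filter_upwards [eventually_ge_atTop (0:ℝ)] with t ht
    have h1 : 0 ≤ t / (t ^ 2 + 1) := by positivity
    have h2 : t / (t ^ 2 + 1) ≤ 1 := by
      rw [div_le_one (by positivity)]; nlinarith
    have hnn : 0 ≤ hfun t := by
      unfold hfun; exact mul_nonneg h1 (g_pos t).le
    rw [abs_of_nonneg hnn]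
    unfold hfun
    nlinarith [g_pos t]
  have h0 : Tendsto (fun _ : ℝ => (0:ℝ)) atTop (nhds 0) := tendsto_const_nhds
  apply squeeze_zero_norm' _ tendsto_g_atTop
  simpa [Real.norm_eq_abs] using hb

lemma integrableOn_hderiv {x : ℝ} :
    MeasureTheory.IntegrableOn
      (fun t => (1 - 2 * t ^ 2 - t ^ 4) / (t ^ 2 + 1) ^ 2 * g t) (Ioi x) := by
  apply MeasureTheory.Integrable.mono (integrable_g.integrableOn)
  · apply Continuous.aestronglyMeasurable
    apply Continuous.mul
    · apply Continuous.div (by continuity) (by continuity)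
      intro t; positivity
    · exact Real.continuous_exp.comp (by continuity)
  · apply MeasureTheory.ae_of_all
    intro t
    rw [Real.norm_eq_abs, Real.norm_eq_abs, abs_mul, abs_of_nonneg (g_pos t).le]
    have h1 : |(1 - 2 * t ^ 2 - t ^ 4) / (t ^ 2 + 1) ^ 2| ≤ 1 := by
      rw [abs_div, abs_of_nonneg (by positivity : (0:ℝ) ≤ (t ^ 2 + 1) ^ 2),
        div_le_one (by positivity)]
      rw [abs_le]
      constructor <;> nlinarith
    nlinarith [g_pos t, abs_nonneg ((1 - 2 * t ^ 2 - t ^ 4) / (t ^ 2 + 1) ^ 2)]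

lemma tail_lower {x : ℝ} (hx : 0 < x) : phi x * x / (x ^ 2 + 1) ≤ 1 - Phi x := by
  have hint := MeasureTheory.integral_Ioi_of_hasDerivAt_of_tendsto
    (a := x) ((hasDerivAt_hfun x).continuousAt.continuousWithinAt)
    (fun t _ => hasDerivAt_hfun t) integrableOn_hderiv hfun_tendsto
  have key : hfun x ≤ ∫ t in Ioi x, g t := by
    have h1 : hfun x = ∫ t in Ioi x, -((1 - 2 * t ^ 2 - t ^ 4) / (t ^ 2 + 1) ^ 2 * g t) := by
      rw [MeasureTheory.integral_neg, hint]; ring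
    rw [h1]
    apply MeasureTheory.setIntegral_mono_on (integrableOn_hderiv.neg)
      integrable_g.integrableOn measurableSet_Ioi
    intro t _
    show -((1 - 2 * t ^ 2 - t ^ 4) / (t ^ 2 + 1) ^ 2 * g t) ≤ g t
    have h2 : -((1 - 2 * t ^ 2 - t ^ 4) / (t ^ 2 + 1) ^ 2) ≤ 1 := by
      rw [neg_le, le_div_iff₀ (by positivity)]
      nlinarith
    nlinarith [g_pos t]
  rw [one_sub_Phi]
  have := mul_le_mul_of_nonneg_left key K_pos.le
  calc phi x * x / (x ^ 2 + 1) = K * hfun x := by unfold phi hfun; ring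
    _ ≤ K * ∫ t in Ioi x, g t := this

lemma tendsto_mills :
    Tendsto (fun x => (1 - Phi x) * x / phi x) atTop (nhds 1) := by
  have hlo : Tendsto (fun x : ℝ => x ^ 2 / (x ^ 2 + 1)) atTop (nhds 1) := by
    have h1 : Tendsto (fun x : ℝ => 1 - 1 / (x ^ 2 + 1)) atTop (nhds (1 - 0)) := by
      apply Tendsto.const_sub
      apply Tendsto.div_atTop tendsto_const_nhds
      exact tendsto_atTop_add_const_right _ 1 (tendsto_pow_atTop (by norm_num))
    rw [sub_zero] at h1
    apply h1.congr'
    filter_upwards [eventually_gt_atTop (0:ℝ)] with x hx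
    field_simp
    ring
  apply tendsto_of_tendsto_of_tendsto_of_le_of_le' hlo tendsto_const_nhds
  · filter_upwards [eventually_gt_atTop (0:ℝ)] with x hx
    have h := tail_lower hx
    have key : phi x * x ≤ (1 - Phi x) * (x ^ 2 + 1) := by
      rw [div_le_iff₀ (by positivity)] at h
      linarith
    rw [div_le_div_iff₀ (by positivity) (phi_pos x)]
    nlinarith [key, hx.le]
  · filter_upwards [eventually_gt_atTop (0:ℝ)] with x hx
    have := tail_upper hx
    rw [div_le_one (phi_pos x)]
    calc (1 - Phi x) * x ≤ (phi x / x) * x := mul_le_mul_of_nonneg_right this hx.le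
      _ = phi x := by field_simp

lemma tendsto_linear_atTop {α : ℝ} (hα : 0 < α) (z : ℝ) :
    Tendsto (fun s : ℝ => s * α - z) atTop atTop := by
  simpa [sub_eq_add_neg] using
    tendsto_atTop_add_const_right atTop (-z) (tendsto_id.atTop_mul_const hα)

lemma tail_ratio {α : ℝ} (hα : 0 < α) (z : ℝ) :
    Tendsto (fun s => phi (s * α - z) / (s * (1 - Phi (s * α - z)))) atTop (nhds α) := by
  have hM : Tendsto (fun s => (1 - Phi (s * α - z)) * (s * α - z) / phi (s * α - z))
      atTop (nhds 1) := tendsto_mills.comp (tendsto_linear_atTop hα z)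
  have hz : Tendsto (fun s : ℝ => α - z / s) atTop (nhds (α - 0)) :=
    tendsto_const_nhds.sub (tendsto_const_nhds.div_atTop tendsto_id)
  rw [sub_zero] at hz
  have hq : Tendsto (fun s => (α - z / s) /
      ((1 - Phi (s * α - z)) * (s * α - z) / phi (s * α - z))) atTop (nhds (α / 1)) :=
    hz.div hM one_ne_zero
  rw [div_one] at hq
  apply hq.congr'
  have hev : ∀ᶠ s : ℝ in atTop, 0 < s ∧ 0 < s * α - z := by
    filter_upwards [eventually_gt_atTop (0:ℝ), eventually_gt_atTop ((z+1)/α)] with s h1 h2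
    refine ⟨h1, ?_⟩
    rw [div_lt_iff₀ hα] at h2
    linarith [mul_comm s α]
  filter_upwards [hev] with s hs
  obtain ⟨hs0, hsz⟩ := hs
  have h1 : (1 : ℝ) - Phi (s * α - z) > 0 := by linarith [Phi_lt_one (s * α - z)]
  have h2 : phi (s * α - z) > 0 := phi_pos _
  rw [div_eq_div_iff (div_ne_zero (mul_ne_zero h1.ne' hsz.ne') h2.ne') (mul_ne_zero hs0.ne' h1.ne')]
  generalize Phi (s * α - z) = P at *
  generalize phi (s * α - z) = p at *
  field_simp

noncomputable def tau (a b z s : ℝ) : ℝ := Phi (s * a - z) - Phi (s * b - z)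

noncomputable def Gfun (a b z Λ s : ℝ) : ℝ :=
  ((tau a b z s)⁻¹ + (1 - tau a b z s)⁻¹) *
    (phi (s * a - z) * (1 / (2 * s) * (1 / Λ) * a) -
      phi (s * b - z) * (1 / (2 * s) * (1 / Λ) * b))

lemma phi_even (x : ℝ) : phi (-x) = phi x := by
  unfold phi g; ring_nf

lemma phi_div_phi (x y : ℝ) : phi x / phi y = Real.exp ((y ^ 2 - x ^ 2) / 2) := by
  unfold phi g
  rw [mul_div_mul_left _ _ (ne_of_gt K_pos), ← Real.exp_sub]
  ring_nf

lemma tau_symm (a b z s : ℝ) : tau (-b) (-a) (-z) s = tau a b z s := by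
  unfold tau
  have h1 : s * -b - -z = -(s * b - z) := by ring
  have h2 : s * -a - -z = -(s * a - z) := by ring
  rw [h1, h2, Phi_neg, Phi_neg]
  ring

lemma Gfun_symm (a b z Λ s : ℝ) : Gfun (-b) (-a) (-z) Λ s = Gfun a b z Λ s := by
  unfold Gfun
  rw [tau_symm]
  have h1 : s * -b - -z = -(s * b - z) := by ring
  have h2 : s * -a - -z = -(s * a - z) := by ring
  rw [h1, h2, phi_even, phi_even]
  ring

lemma tendsto_linear_atBot {α : ℝ} (hα : α < 0) (z : ℝ) :
    Tendsto (fun s : ℝ => s * α - z) atTop atBot := by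
  simpa [sub_eq_add_neg] using
    tendsto_atBot_add_const_right atTop (-z) (tendsto_id.atTop_mul_const_of_neg hα)

lemma tendsto_Phi_comp_pos {α : ℝ} (hα : 0 < α) (z : ℝ) :
    Tendsto (fun s : ℝ => Phi (s * α - z)) atTop (nhds 1) :=
  Phi_tendsto_atTop.comp (tendsto_linear_atTop hα z)

lemma tendsto_Phi_comp_neg {α : ℝ} (hα : α < 0) (z : ℝ) :
    Tendsto (fun s : ℝ => Phi (s * α - z)) atTop (nhds 0) :=
  Phi_tendsto_atBot.comp (tendsto_linear_atBot hα z)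

lemma phi_le_K (x : ℝ) : phi x ≤ K := by
  have h : g x ≤ 1 := by
    rw [g_eq]
    apply Real.exp_le_one_iff.mpr
    nlinarith [sq_nonneg x]
  calc phi x = K * g x := rfl
    _ ≤ K * 1 := mul_le_mul_of_nonneg_left h K_pos.le
    _ = K := mul_one K

lemma tendsto_term_zero (α z Λ : ℝ) :
    Tendsto (fun s : ℝ => phi (s * α - z) * (1 / (2 * s) * (1 / Λ) * α))
      atTop (nhds 0) := by
  have h2 : Tendsto (fun s : ℝ => 1 / (2 * s) * (1 / Λ) * α) atTop (nhds 0) := by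
    have h0 : Tendsto (fun s : ℝ => 1 / (2 * s)) atTop (nhds 0) := by
      apply Tendsto.div_atTop tendsto_const_nhds
      exact (tendsto_id.const_mul_atTop (by norm_num : (0:ℝ) < 2))
    simpa using ((h0.mul_const (1 / Λ)).mul_const α)
  have h3 : Tendsto (fun s : ℝ => K * |1 / (2 * s) * (1 / Λ) * α|) atTop (nhds 0) := by
    simpa using (h2.abs.const_mul K)
  apply squeeze_zero_norm' _ h3
  filter_upwards with s
  rw [Real.norm_eq_abs, abs_mul, abs_of_pos (phi_pos _)]
  exact mul_le_mul_of_nonneg_right (phi_le_K _) (abs_nonneg _)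

lemma tendsto_N_zero (a b z Λ : ℝ) :
    Tendsto (fun s : ℝ => phi (s * a - z) * (1 / (2 * s) * (1 / Λ) * a) -
      phi (s * b - z) * (1 / (2 * s) * (1 / Λ) * b)) atTop (nhds 0) := by
  simpa using (tendsto_term_zero a z Λ).sub (tendsto_term_zero b z Λ)

lemma tendsto_lower_ratio {β : ℝ} (hβ : β < 0) (z : ℝ) :
    Tendsto (fun s => phi (s * β - z) / (s * Phi (s * β - z))) atTop (nhds (-β)) := by
  have h := tail_ratio (by linarith : 0 < -β) (-z)
  apply h.congr
  intro s
  have h1 : s * -β - -z = -(s * β - z) := by ring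
  rw [h1, phi_even, Phi_neg]
  ring_nf

lemma tendsto_phi_ratio {a b z : ℝ} (hab : a ^ 2 < b ^ 2) :
    Tendsto (fun s => phi (s * b - z) / phi (s * a - z)) atTop (nhds 0) := by
  have h1 : Tendsto (fun s : ℝ => s * (s * (a ^ 2 - b ^ 2) - 2 * z * (a - b)) / 2)
      atTop atBot := by
    apply Tendsto.atBot_div_const (by norm_num : (0:ℝ) < 2)
    apply Tendsto.atTop_mul_atBot₀ tendsto_id
    exact tendsto_linear_atBot (by linarith) _
  have h2 := Real.tendsto_exp_atBot.comp h1
  apply h2.congr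
  intro s
  simp only [Function.comp_apply]
  rw [phi_div_phi]
  congr 1
  ring

lemma case_zero {b : ℝ} (z Λ : ℝ) (hb : b < 0) :
    Tendsto (Gfun 0 b z Λ) atTop (nhds 0) := by
  have hτ : Tendsto (fun s => tau 0 b z s) atTop (nhds (Phi (-z))) := by
    have h1 : (fun s : ℝ => tau 0 b z s) = fun s => Phi (-z) - Phi (s * b - z) := by
      funext s; unfold tau; norm_num
    rw [h1]
    simpa using (tendsto_const_nhds.sub (tendsto_Phi_comp_neg hb z))
  have h1 : (1 : ℝ) - Phi (-z) ≠ 0 := by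
    have := Phi_lt_one (-z); linarith
  have hinv : Tendsto (fun s => (tau 0 b z s)⁻¹ + (1 - tau 0 b z s)⁻¹) atTop
      (nhds ((Phi (-z))⁻¹ + (1 - Phi (-z))⁻¹)) :=
    (hτ.inv₀ (ne_of_gt (Phi_pos _))).add ((tendsto_const_nhds.sub hτ).inv₀ h1)
  have := hinv.mul (tendsto_N_zero 0 b z Λ)
  rw [mul_zero] at this
  exact this.congr (fun s => by rw [Gfun])

lemma case_neg {a b : ℝ} (z : ℝ) {Λ : ℝ} (hΛ : 0 < Λ) (ha : a < 0) (hba : b < a) :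
    Tendsto (Gfun a b z Λ) atTop (nhds (-a ^ 2 / (2 * Λ))) := by
  have hb : b < 0 := lt_trans hba ha
  have hsq : a ^ 2 < b ^ 2 := by nlinarith
  have hτ : Tendsto (fun s => tau a b z s) atTop (nhds 0) := by
    simpa [tau] using (tendsto_Phi_comp_neg ha z).sub (tendsto_Phi_comp_neg hb z)
  have hpart2 : Tendsto (fun s => (1 - tau a b z s)⁻¹ *
      (phi (s * a - z) * (1 / (2 * s) * (1 / Λ) * a) -
        phi (s * b - z) * (1 / (2 * s) * (1 / Λ) * b))) atTop (nhds 0) := by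
    have := ((tendsto_const_nhds.sub hτ).inv₀
      (by norm_num : (1 : ℝ) - 0 ≠ 0)).mul (tendsto_N_zero a b z Λ)
    simpa using this
  have hX : Tendsto (fun s => phi (s * a - z) / (s * Phi (s * a - z))) atTop (nhds (-a)) :=
    tendsto_lower_ratio ha z
  have hY : Tendsto (fun s => phi (s * b - z) / (s * Phi (s * b - z))) atTop (nhds (-b)) :=
    tendsto_lower_ratio hb z
  have hW : Tendsto (fun s => Phi (s * b - z) / Phi (s * a - z)) atTop (nhds 0) := by
    have h2 : Tendsto (fun s => (phi (s * b - z) / phi (s * a - z)) *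
        ((phi (s * a - z) / (s * Phi (s * a - z))) /
          (phi (s * b - z) / (s * Phi (s * b - z))))) atTop (nhds (0 * (-a / -b))) :=
      (tendsto_phi_ratio hsq).mul (hX.div hY (ne_of_gt (by linarith : (0:ℝ) < -b)))
    rw [zero_mul] at h2
    apply h2.congr'
    filter_upwards [eventually_gt_atTop (0:ℝ)] with s hs
    have hfa := phi_pos (s * a - z)
    have hfb := phi_pos (s * b - z)
    have hpa := Phi_pos (s * a - z)
    have hpb := Phi_pos (s * b - z)
    field_simp
  have hE : Tendsto (fun s => (a * (phi (s * a - z) / (s * Phi (s * a - z))) -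
      b * (Phi (s * b - z) / Phi (s * a - z) *
        (phi (s * b - z) / (s * Phi (s * b - z))))) /
      (2 * Λ * (1 - Phi (s * b - z) / Phi (s * a - z)))) atTop
      (nhds ((a * -a - b * (0 * -b)) / (2 * Λ * (1 - 0)))) := by
    apply Tendsto.div
    · exact (hX.const_mul a).sub ((hW.mul hY).const_mul b)
    · exact (tendsto_const_nhds.sub hW).const_mul (2 * Λ)
    · simp; positivity
  have hval : (a * -a - b * (0 * -b)) / (2 * Λ * (1 - 0)) = -a ^ 2 / (2 * Λ) := by
    ring
  rw [hval] at hE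
  have hpart1 : Tendsto (fun s => (tau a b z s)⁻¹ *
      (phi (s * a - z) * (1 / (2 * s) * (1 / Λ) * a) -
        phi (s * b - z) * (1 / (2 * s) * (1 / Λ) * b))) atTop (nhds (-a ^ 2 / (2 * Λ))) := by
    apply hE.congr'
    filter_upwards [eventually_gt_atTop (0:ℝ)] with s hs
    have hfa := phi_pos (s * a - z)
    have hfb := phi_pos (s * b - z)
    have hpa := Phi_pos (s * a - z)
    have hpb := Phi_pos (s * b - z)
    have hlt : Phi (s * b - z) < Phi (s * a - z) := by
      apply strictMono_Phi
      have : s * b < s * a := by exact (mul_lt_mul_iff_right₀ hs).2 hba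
      linarith
    have hτs : tau a b z s = Phi (s * a - z) - Phi (s * b - z) := rfl
    rw [hτs]
    have hd : Phi (s * a - z) - Phi (s * b - z) > 0 := by linarith
    have := hpa.ne'; have := hd.ne'; have := hs.ne'
    generalize Phi (s * a - z) = A at *
    generalize Phi (s * b - z) = B at *
    generalize phi (s * a - z) = fa at *
    generalize phi (s * b - z) = fb at *
    field_simp
  have hsum := hpart1.add hpart2
  rw [show -a ^ 2 / (2 * Λ) + 0 = -a ^ 2 / (2 * Λ) from by ring] at hsum
  apply hsum.congr
  intro s
  rw [Gfun]
  ring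

lemma case_int {a b : ℝ} (z : ℝ) {Λ : ℝ} (hΛ : 0 < Λ) (ha : 0 < a) (hb : b < 0)
    (hsq : a ^ 2 ≤ b ^ 2) :
    Tendsto (Gfun a b z Λ) atTop (nhds (a ^ 2 / (2 * Λ))) := by
  have hτ : Tendsto (fun s => tau a b z s) atTop (nhds 1) := by
    simpa [tau] using (tendsto_Phi_comp_pos ha z).sub (tendsto_Phi_comp_neg hb z)
  have hpart1 : Tendsto (fun s => (tau a b z s)⁻¹ *
      (phi (s * a - z) * (1 / (2 * s) * (1 / Λ) * a) -
        phi (s * b - z) * (1 / (2 * s) * (1 / Λ) * b))) atTop (nhds 0) := by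
    have := (hτ.inv₀ one_ne_zero).mul (tendsto_N_zero a b z Λ)
    simpa using this
  have hX : Tendsto (fun s => phi (s * a - z) / (s * (1 - Phi (s * a - z)))) atTop
      (nhds a) := tail_ratio ha z
  have hY : Tendsto (fun s => phi (s * b - z) / (s * Phi (s * b - z))) atTop (nhds (-b)) :=
    tendsto_lower_ratio hb z
  -- the key part-2 expression
  have hEeq : ∀ᶠ s : ℝ in atTop, (1 - tau a b z s)⁻¹ *
      (phi (s * a - z) * (1 / (2 * s) * (1 / Λ) * a) -
        phi (s * b - z) * (1 / (2 * s) * (1 / Λ) * b)) =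
      (a * (phi (s * a - z) / (s * (1 - Phi (s * a - z)))) -
        b * (Phi (s * b - z) / (1 - Phi (s * a - z)) *
          (phi (s * b - z) / (s * Phi (s * b - z))))) /
      (2 * Λ * (1 + Phi (s * b - z) / (1 - Phi (s * a - z)))) := by
    filter_upwards [eventually_gt_atTop (0:ℝ)] with s hs
    have hfa := phi_pos (s * a - z)
    have hfb := phi_pos (s * b - z)
    have hpa := Phi_pos (s * a - z)
    have hpb := Phi_pos (s * b - z)
    have hpa1 : (1:ℝ) - Phi (s * a - z) > 0 := by linarith [Phi_lt_one (s * a - z)]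
    have hτs : tau a b z s = Phi (s * a - z) - Phi (s * b - z) := rfl
    rw [hτs]
    have hd : (1:ℝ) - (Phi (s * a - z) - Phi (s * b - z)) > 0 := by
      linarith [Phi_lt_one (s * a - z)]
    field_simp
    ring
  have hpart2 : Tendsto (fun s => (1 - tau a b z s)⁻¹ *
      (phi (s * a - z) * (1 / (2 * s) * (1 / Λ) * a) -
        phi (s * b - z) * (1 / (2 * s) * (1 / Λ) * b))) atTop
      (nhds (a ^ 2 / (2 * Λ))) := by
    rcases lt_or_eq_of_le hsq with hlt | heq
    · -- a^2 < b^2 : the ratio W tends to 0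
      have hW : Tendsto (fun s => Phi (s * b - z) / (1 - Phi (s * a - z))) atTop
          (nhds 0) := by
        have h2 : Tendsto (fun s => (phi (s * b - z) / phi (s * a - z)) *
            ((phi (s * a - z) / (s * (1 - Phi (s * a - z)))) /
              (phi (s * b - z) / (s * Phi (s * b - z))))) atTop
            (nhds (0 * (a / -b))) :=
          (tendsto_phi_ratio hlt).mul (hX.div hY (ne_of_gt (by linarith : (0:ℝ) < -b)))
        rw [zero_mul] at h2
        apply h2.congr'
        filter_upwards [eventually_gt_atTop (0:ℝ)] with s hs
        have hfa := phi_pos (s * a - z)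
        have hfb := phi_pos (s * b - z)
        have hpb := Phi_pos (s * b - z)
        have hpa1 : (1:ℝ) - Phi (s * a - z) > 0 := by linarith [Phi_lt_one (s * a - z)]
        field_simp
      have hE : Tendsto (fun s => (a * (phi (s * a - z) / (s * (1 - Phi (s * a - z)))) -
          b * (Phi (s * b - z) / (1 - Phi (s * a - z)) *
            (phi (s * b - z) / (s * Phi (s * b - z))))) /
          (2 * Λ * (1 + Phi (s * b - z) / (1 - Phi (s * a - z))))) atTop
          (nhds ((a * a - b * (0 * -b)) / (2 * Λ * (1 + 0)))) := by
        apply Tendsto.div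
        · exact (hX.const_mul a).sub ((hW.mul hY).const_mul b)
        · exact (tendsto_const_nhds.add hW).const_mul (2 * Λ)
        · simp; positivity
      have hval : (a * a - b * (0 * -b)) / (2 * Λ * (1 + 0)) = a ^ 2 / (2 * Λ) := by ring
      rw [hval] at hE
      apply hE.congr'
      filter_upwards [hEeq] with s h
      exact h.symm
    · -- a^2 = b^2, i.e. b = -a : squeeze
      have hba : b = -a := by nlinarith
      have hlo : Tendsto (fun s => min (a * (phi (s * a - z) / (s * (1 - Phi (s * a - z)))))
          (-b * (phi (s * b - z) / (s * Phi (s * b - z)))) / (2 * Λ)) atTop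
          (nhds (a ^ 2 / (2 * Λ))) := by
        have := ((hX.const_mul a).min (hY.const_mul (-b))).div_const (2 * Λ)
        have hv : min (a * a) (-b * -b) = a ^ 2 := by
          rw [hba]; ring_nf; simp
        rwa [hv] at this
      have hhi : Tendsto (fun s => max (a * (phi (s * a - z) / (s * (1 - Phi (s * a - z)))))
          (-b * (phi (s * b - z) / (s * Phi (s * b - z)))) / (2 * Λ)) atTop
          (nhds (a ^ 2 / (2 * Λ))) := by
        have := ((hX.const_mul a).max (hY.const_mul (-b))).div_const (2 * Λ)
        have hv : max (a * a) (-b * -b) = a ^ 2 := by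
          rw [hba]; ring_nf; simp
        rwa [hv] at this
      apply tendsto_of_tendsto_of_tendsto_of_le_of_le' hlo hhi
      · -- lower bound eventually
        filter_upwards [hEeq, eventually_gt_atTop (0:ℝ)] with s hEs hs
        rw [hEs]
        set X := phi (s * a - z) / (s * (1 - Phi (s * a - z))) with hXdef
        set Y := phi (s * b - z) / (s * Phi (s * b - z)) with hYdef
        set W := Phi (s * b - z) / (1 - Phi (s * a - z)) with hWdef
        have hXpos : 0 < X := by
          apply div_pos (phi_pos _)
          exact mul_pos hs (by linarith [Phi_lt_one (s * a - z)])
        have hYpos : 0 < Y := by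
          apply div_pos (phi_pos _) (mul_pos hs (Phi_pos _))
        have hWpos : 0 < W := by
          apply div_pos (Phi_pos _) (by linarith [Phi_lt_one (s * a - z)])
        have hnum : a * X - b * (W * Y) = a * X + W * (-b * Y) := by ring
        have hm1 : min (a * X) (-b * Y) ≤ a * X := min_le_left _ _
        have hm2 : min (a * X) (-b * Y) ≤ -b * Y := min_le_right _ _
        rw [div_le_div_iff₀ (by positivity) (by positivity)]
        rw [hnum]
        nlinarith [mul_le_mul_of_nonneg_right hm2 hWpos.le, hm1, hΛ, hWpos]
      · -- upper bound eventually
        filter_upwards [hEeq, eventually_gt_atTop (0:ℝ)] with s hEs hs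
        rw [hEs]
        set X := phi (s * a - z) / (s * (1 - Phi (s * a - z))) with hXdef
        set Y := phi (s * b - z) / (s * Phi (s * b - z)) with hYdef
        set W := Phi (s * b - z) / (1 - Phi (s * a - z)) with hWdef
        have hWpos : 0 < W := by
          apply div_pos (Phi_pos _) (by linarith [Phi_lt_one (s * a - z)])
        have hnum : a * X - b * (W * Y) = a * X + W * (-b * Y) := by ring
        have hm1 : a * X ≤ max (a * X) (-b * Y) := le_max_left _ _
        have hm2 : -b * Y ≤ max (a * X) (-b * Y) := le_max_right _ _
        rw [div_le_div_iff₀ (by positivity) (by positivity)]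
        rw [hnum]
        nlinarith [mul_le_mul_of_nonneg_right hm2 hWpos.le, hm1, hΛ, hWpos]
  have hsum := hpart1.add hpart2
  rw [show (0:ℝ) + a ^ 2 / (2 * Λ) = a ^ 2 / (2 * Λ) from by ring] at hsum
  apply hsum.congr
  intro s
  rw [Gfun]
  ring

lemma tendsto_Gfun {a b : ℝ} (z : ℝ) {Λ : ℝ} (hΛ : 0 < Λ) (hba : b < a) :
    Tendsto (Gfun a b z Λ) atTop
      (nhds ((if 0 < a ∧ b < 0 then (1:ℝ) else -1) * min (a ^ 2) (b ^ 2) / (2 * Λ))) := by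
  have hsymm : Gfun (-b) (-a) (-z) Λ = Gfun a b z Λ := funext fun s => Gfun_symm a b z Λ s
  rcases lt_trichotomy a 0 with ha | ha | ha
  · -- a < 0
    have hmin : min (a ^ 2) (b ^ 2) = a ^ 2 := min_eq_left (by nlinarith)
    have hif : (if 0 < a ∧ b < 0 then (1:ℝ) else -1) = -1 := by
      rw [if_neg]; rintro ⟨h1, _⟩; linarith
    rw [hif, hmin]
    have := case_neg z hΛ ha hba
    rw [show (-1 : ℝ) * a ^ 2 / (2 * Λ) = -a ^ 2 / (2 * Λ) from by ring]
    exact this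
  · -- a = 0
    subst ha
    have hb : b < 0 := hba
    have hmin : min ((0:ℝ) ^ 2) (b ^ 2) = 0 := by
      rw [min_eq_left (by simpa using sq_nonneg b)]; norm_num
    have hif : (if (0:ℝ) < 0 ∧ b < 0 then (1:ℝ) else -1) = -1 := by
      rw [if_neg]; rintro ⟨h1, _⟩; linarith
    rw [hif, hmin]
    rw [show (-1 : ℝ) * 0 / (2 * Λ) = 0 from by ring]
    exact case_zero z Λ hb
  · -- 0 < a
    rcases lt_trichotomy b 0 with hb | hb | hb
    · -- interior case
      have hif : (if 0 < a ∧ b < 0 then (1:ℝ) else -1) = 1 := if_pos ⟨ha, hb⟩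
      rw [hif]
      rcases le_total (a ^ 2) (b ^ 2) with hsq | hsq
      · have hmin : min (a ^ 2) (b ^ 2) = a ^ 2 := min_eq_left hsq
        rw [hmin, one_mul]
        exact case_int z hΛ ha hb hsq
      · have hmin : min (a ^ 2) (b ^ 2) = b ^ 2 := min_eq_right hsq
        rw [hmin, one_mul]
        have h2 : Tendsto (Gfun (-b) (-a) (-z) Λ) atTop (nhds ((-b) ^ 2 / (2 * Λ))) := by
          apply case_int (-z) hΛ (by linarith) (by linarith)
          nlinarith
        rw [hsymm] at h2
        rw [show (-b : ℝ) ^ 2 = b ^ 2 from by ring] at h2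
        exact h2
    · -- b = 0
      subst hb
      have hmin : min (a ^ 2) ((0:ℝ) ^ 2) = 0 := by
        rw [min_eq_right (by simpa using sq_nonneg a)]; norm_num
      have hif : (if 0 < a ∧ (0:ℝ) < 0 then (1:ℝ) else -1) = -1 := by
        rw [if_neg]; rintro ⟨_, h1⟩; linarith
      rw [hif, hmin]
      rw [show (-1 : ℝ) * 0 / (2 * Λ) = 0 from by ring]
      have h2 : Tendsto (Gfun (-(0:ℝ)) (-a) (-z) Λ) atTop (nhds 0) := by
        rw [neg_zero]
        exact case_zero (-z) Λ (by linarith)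
      rwa [hsymm] at h2
    · -- 0 < b
      have hmin : min (a ^ 2) (b ^ 2) = b ^ 2 := min_eq_right (by nlinarith)
      have hif : (if 0 < a ∧ b < 0 then (1:ℝ) else -1) = -1 := by
        rw [if_neg]; rintro ⟨_, h1⟩; linarith
      rw [hif, hmin]
      have h2 : Tendsto (Gfun (-b) (-a) (-z) Λ) atTop (nhds (-(-b) ^ 2 / (2 * Λ))) :=
        case_neg (-z) hΛ (by linarith) (by linarith)
      rw [hsymm] at h2
      rw [show (-(-b : ℝ) ^ 2 / (2 * Λ)) = -1 * b ^ 2 / (2 * Λ) from by ring] at h2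
      exact h2

lemma hasDerivAt_logit {t : ℝ} (h0 : 0 < t) (h1 : t < 1) :
    HasDerivAt logit (t⁻¹ + (1 - t)⁻¹) t := by
  have hl1 : HasDerivAt Real.log t⁻¹ t := Real.hasDerivAt_log (ne_of_gt h0)
  have hinner : HasDerivAt (fun x : ℝ => 1 - x) (-1) t := by
    simpa using (hasDerivAt_id t).const_sub 1
  have hl2 : HasDerivAt (fun x : ℝ => Real.log (1 - x)) ((1 - t)⁻¹ * -1) t :=
    (Real.hasDerivAt_log (by intro h; rw [sub_eq_zero] at h; exact (ne_of_lt h1) h.symm)).comp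
      t hinner
  have h3 : HasDerivAt (fun x : ℝ => Real.log x - Real.log (1 - x))
      (t⁻¹ - (1 - t)⁻¹ * -1) t := hl1.sub hl2
  have h4 : t⁻¹ - (1 - t)⁻¹ * -1 = t⁻¹ + (1 - t)⁻¹ := by ring
  rw [h4] at h3
  exact h3

lemma tendsto_sqrt_atTop : Tendsto Real.sqrt atTop atTop := by
  apply tendsto_atTop_atTop.mpr
  intro bb
  refine ⟨bb ^ 2, fun x hx => ?_⟩
  calc bb ≤ |bb| := le_abs_self bb
    _ = Real.sqrt (bb ^ 2) := (Real.sqrt_sq_eq_abs bb).symm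
    _ ≤ Real.sqrt x := Real.sqrt_le_sqrt hx

lemma hasDerivAt_main {a b z Λ : ℝ} (hba : b < a) (hΛ : 0 < Λ) {c : ℝ} (hc : 0 < c) :
    HasDerivAt (fun c : ℝ =>
      logit (Phi (Real.sqrt (c / Λ) * a - z) - Phi (Real.sqrt (c / Λ) * b - z)))
      (Gfun a b z Λ (Real.sqrt (c / Λ))) c := by
  have hcΛ : 0 < c / Λ := div_pos hc hΛ
  set s := Real.sqrt (c / Λ) with hsdef
  have hs : 0 < s := Real.sqrt_pos.2 hcΛ
  have hsq : HasDerivAt (fun c : ℝ => Real.sqrt (c / Λ)) (1 / (2 * s) * (1 / Λ)) c := by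
    have h1 : HasDerivAt (fun c : ℝ => c / Λ) (1 / Λ) c := by
      simpa using (hasDerivAt_id c).div_const Λ
    have h2 : HasDerivAt Real.sqrt (1 / (2 * Real.sqrt (c / Λ))) (c / Λ) :=
      Real.hasDerivAt_sqrt (ne_of_gt hcΛ)
    have := h2.comp c h1
    simpa [Function.comp_def, hsdef] using this
  have hA : HasDerivAt (fun c : ℝ => Real.sqrt (c / Λ) * a - z)
      (1 / (2 * s) * (1 / Λ) * a) c := (hsq.mul_const a).sub_const z
  have hB : HasDerivAt (fun c : ℝ => Real.sqrt (c / Λ) * b - z)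
      (1 / (2 * s) * (1 / Λ) * b) c := (hsq.mul_const b).sub_const z
  have hPA : HasDerivAt (fun c : ℝ => Phi (Real.sqrt (c / Λ) * a - z))
      (phi (s * a - z) * (1 / (2 * s) * (1 / Λ) * a)) c := by
    have := (hasDerivAt_Phi (s * a - z)).comp c hA
    simpa [Function.comp_def, hsdef, mul_comm] using this
  have hPB : HasDerivAt (fun c : ℝ => Phi (Real.sqrt (c / Λ) * b - z))
      (phi (s * b - z) * (1 / (2 * s) * (1 / Λ) * b)) c := by
    have := (hasDerivAt_Phi (s * b - z)).comp c hB
    simpa [Function.comp_def, hsdef, mul_comm] using this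
  have htau : HasDerivAt (fun c : ℝ =>
      Phi (Real.sqrt (c / Λ) * a - z) - Phi (Real.sqrt (c / Λ) * b - z))
      (phi (s * a - z) * (1 / (2 * s) * (1 / Λ) * a) -
        phi (s * b - z) * (1 / (2 * s) * (1 / Λ) * b)) c := hPA.sub hPB
  have ht0 : 0 < Phi (s * a - z) - Phi (s * b - z) := by
    have : Phi (s * b - z) < Phi (s * a - z) := by
      apply strictMono_Phi
      have : s * b < s * a := (mul_lt_mul_iff_right₀ hs).2 hba
      linarith
    linarith
  have ht1 : Phi (s * a - z) - Phi (s * b - z) < 1 := by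
    have h1 := Phi_lt_one (s * a - z)
    have h2 := Phi_pos (s * b - z)
    linarith
  have hlog := hasDerivAt_logit ht0 ht1
  have hcomp := hlog.comp c (by simpa [hsdef] using htau)
  have hfinal : HasDerivAt (fun c : ℝ =>
      logit (Phi (Real.sqrt (c / Λ) * a - z) - Phi (Real.sqrt (c / Λ) * b - z)))
      (((Phi (s * a - z) - Phi (s * b - z))⁻¹ + (1 - (Phi (s * a - z) - Phi (s * b - z)))⁻¹) *
        (phi (s * a - z) * (1 / (2 * s) * (1 / Λ) * a) -
          phi (s * b - z) * (1 / (2 * s) * (1 / Λ) * b))) c := by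
    simpa [Function.comp_def, hsdef] using hcomp
  have : Gfun a b z Λ s =
      ((Phi (s * a - z) - Phi (s * b - z))⁻¹ + (1 - (Phi (s * a - z) - Phi (s * b - z)))⁻¹) *
        (phi (s * a - z) * (1 / (2 * s) * (1 / Λ) * a) -
          phi (s * b - z) * (1 / (2 * s) * (1 / Λ) * b)) := rfl
  rw [this]
  exact hfinal

end GaussAux

open GaussAux

theorem limiting_derivative_of_logit_proxy
    (δL δU δ Λ z : ℝ) (hLU : δL < δU) (hΛ : 0 < Λ) :
    Tendsto
      (deriv (fun c : ℝ => logit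
        (Phi (Real.sqrt (c / Λ) * (δU - δ) - z) - Phi (Real.sqrt (c / Λ) * (δL - δ) - z))))
      atTop
      (nhds ((1 / 2 - (if δ ∈ Set.Ioo δL δU then (0 : ℝ) else 1)) *
        min ((δU - δ) ^ 2 / Λ) ((δL - δ) ^ 2 / Λ))) := by
  set a := δU - δ with ha
  set b := δL - δ with hb
  have hba : b < a := by rw [ha, hb]; linarith
  have hcomp : Tendsto (fun c : ℝ => Real.sqrt (c / Λ)) atTop atTop :=
    tendsto_sqrt_atTop.comp (tendsto_id.atTop_div_const hΛ)
  have h := (tendsto_Gfun z hΛ hba).comp hcomp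
  have heq : (fun c : ℝ => Gfun a b z Λ (Real.sqrt (c / Λ))) =ᶠ[atTop]
      (deriv (fun c : ℝ => logit
        (Phi (Real.sqrt (c / Λ) * a - z) - Phi (Real.sqrt (c / Λ) * b - z)))) := by
    filter_upwards [eventually_gt_atTop (0:ℝ)] with c hc
    exact ((hasDerivAt_main hba hΛ hc).deriv).symm
  have h2 := Tendsto.congr' heq h
  have hval : (if 0 < a ∧ b < 0 then (1:ℝ) else -1) * min (a ^ 2) (b ^ 2) / (2 * Λ) =
      (1 / 2 - (if δ ∈ Set.Ioo δL δU then (0 : ℝ) else 1)) *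
        min (a ^ 2 / Λ) (b ^ 2 / Λ) := by
    have hcond : (0 < a ∧ b < 0) ↔ δ ∈ Set.Ioo δL δU := by
      rw [Set.mem_Ioo, ha, hb]
      constructor
      · rintro ⟨h1, h2⟩; constructor <;> linarith
      · rintro ⟨h1, h2⟩; constructor <;> linarith
    have hmin : min (a ^ 2 / Λ) (b ^ 2 / Λ) = min (a ^ 2) (b ^ 2) / Λ :=
      min_div_div_right hΛ.le _ _
    rw [hmin]
    by_cases hm : δ ∈ Set.Ioo δL δU
    · rw [if_pos (hcond.2 hm), if_pos hm]
      field_simp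
      ring
    · rw [if_neg (fun hh => hm (hcond.1 hh)), if_neg hm]
      field_simp
      ring
  rw [hval] at h2
  exact h2
end

section
/- Let δ_L < δ_U be real numbers, let δ ∈ ℝ satisfy δ_L < δ < δ_U, let Λ > 0 and z ∈ ℝ. Define τ : (0,∞) → ℝ by τ(c) = Φ(√(c/Λ)·(δ_U − δ) − z) − Φ(√(c/Λ)·(δ_L − δ) − z). Then the derivative of the map c ↦ logit(τ(c)) converges, as c → ∞, to (1/2)·min{(δ_U − δ)², (δ_L − δ)²}/Λ. -/
open Filter Set

open MeasureTheory

set_option maxHeartbeats 1000000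

noncomputable def gauss (t : ℝ) : ℝ := Real.exp (-t ^ 2 / 2)

lemma gauss_eq : gauss = fun t : ℝ => Real.exp (-(1/2 : ℝ) * t ^ 2) := by
  funext t; unfold gauss; ring_nf

lemma gauss_cont : Continuous gauss := by unfold gauss; continuity

lemma gauss_pos (t : ℝ) : 0 < gauss t := Real.exp_pos _

lemma gauss_integrable : Integrable gauss := by
  rw [gauss_eq]; exact integrable_exp_neg_mul_sq (by norm_num)

lemma gauss_integral : ∫ t, gauss t = Real.sqrt (2 * Real.pi) := by
  rw [gauss_eq, integral_gaussian]
  congr 1; rw [div_div_eq_mul_div, div_one]; ring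

lemma gauss_even (t : ℝ) : gauss (-t) = gauss t := by unfold gauss; ring_nf

noncomputable def CC : ℝ := (2 * Real.pi) ^ (-(1 : ℝ) / 2)

lemma CC_pos : 0 < CC :=
  Real.rpow_pos_of_pos (by positivity) _

lemma Phi_eq (x : ℝ) : Phi x = CC * ∫ t in Set.Iic x, gauss t := rfl

noncomputable def TT (x : ℝ) : ℝ := CC * ∫ t in Set.Ioi x, gauss t

lemma CC_mul_sqrt : CC * Real.sqrt (2 * Real.pi) = 1 := by
  rw [Real.sqrt_eq_rpow]
  unfold CC
  rw [← Real.rpow_add (by positivity)]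
  norm_num

lemma Phi_add_TT (x : ℝ) : Phi x + TT x = 1 := by
  rw [Phi_eq, TT, ← mul_add]
  have h := integral_add_compl (measurableSet_Iic (a := x)) gauss_integrable
  rw [compl_Iic, gauss_integral] at h
  rw [h, CC_mul_sqrt]

lemma TT_eq (x : ℝ) : TT x = 1 - Phi x := by
  have := Phi_add_TT x; linarith

lemma Phi_neg (x : ℝ) : Phi (-x) = TT x := by
  rw [Phi_eq, TT]
  congr 1
  have h := integral_comp_neg_Iic (-x) gauss
  rw [neg_neg] at h
  rw [← h]
  exact setIntegral_congr_fun measurableSet_Iic (fun t _ => (gauss_even t).symm)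

lemma hasDerivAt_Phi (x : ℝ) : HasDerivAt Phi (CC * gauss x) x := by
  have key : ∀ y : ℝ, Phi y = CC * ((∫ t in Set.Iic (0:ℝ), gauss t) + ∫ t in (0:ℝ)..y, gauss t) := by
    intro y
    rw [Phi_eq]
    congr 1
    have := intervalIntegral.integral_Iic_sub_Iic (μ := volume) (f := gauss) (a := (0:ℝ)) (b := y)
      gauss_integrable.integrableOn gauss_integrable.integrableOn
    linarith
  have h : HasDerivAt (fun y => ∫ t in (0:ℝ)..y, gauss t) (gauss x) x := by
    exact intervalIntegral.integral_hasDerivAt_right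
      (gauss_integrable.intervalIntegrable)
      (gauss_cont.stronglyMeasurable.stronglyMeasurableAtFilter)
      gauss_cont.continuousAt
  have := ((hasDerivAt_const x (∫ t in Set.Iic (0:ℝ), gauss t)).add h).const_mul CC
  have heq : Phi = fun y => CC * ((∫ t in Set.Iic (0:ℝ), gauss t) + ∫ t in (0:ℝ)..y, gauss t) :=
    funext key
  rw [heq]
  refine this.congr_deriv ?_
  ring

lemma TT_pos (x : ℝ) : 0 < TT x := by
  rw [TT]
  apply mul_pos CC_pos
  rw [setIntegral_pos_iff_support_of_nonneg_ae]
  · have : Function.support gauss = univ := by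
      ext t; simp [Function.mem_support, (gauss_pos t).ne']
    rw [this, univ_inter]
    simp [Real.volume_Ioi]
  · exact Eventually.of_forall (fun t => (gauss_pos t).le)
  · exact gauss_integrable.integrableOn

lemma Phi_pos (x : ℝ) : 0 < Phi x := by
  have := Phi_neg (-x)
  rw [neg_neg] at this
  rw [this]
  exact TT_pos _

lemma Phi_lt_one (x : ℝ) : Phi x < 1 := by
  have := TT_pos x
  have := Phi_add_TT x
  linarith

lemma TT_lt_one (x : ℝ) : TT x < 1 := by
  have := Phi_pos x; have := Phi_add_TT x; linarith

lemma Phi_strictMono : StrictMono Phi := by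
  intro x y hxy
  have h1 := TT_eq x
  have h2 := TT_eq y
  have key : TT y < TT x := by
    rw [TT, TT]
    apply mul_lt_mul_of_pos_left _ CC_pos
    have hsub : Ioi y ⊆ Ioi x := Ioi_subset_Ioi hxy.le
    have hint : IntegrableOn gauss (Ioi x) := gauss_integrable.integrableOn
    have : (∫ t in Ioi x, gauss t) = (∫ t in Ioc x y, gauss t) + ∫ t in Ioi y, gauss t := by
      rw [← setIntegral_union]
      · rw [Ioc_union_Ioi_eq_Ioi hxy.le]
      · rw [disjoint_iff_inter_eq_empty]; ext t; simp only [mem_inter_iff, mem_Ioc, mem_Ioi,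
          mem_empty_iff_false, iff_false, not_and]; intro h hh; linarith [h.2]
      · exact measurableSet_Ioi
      · exact gauss_integrable.integrableOn
      · exact gauss_integrable.integrableOn
    rw [this]
    have hpos : 0 < ∫ t in Ioc x y, gauss t := by
      rw [setIntegral_pos_iff_support_of_nonneg_ae]
      · have : Function.support gauss = univ := by
          ext t; simp [Function.mem_support, (gauss_pos t).ne']
        rw [this, univ_inter]
        simp [Real.volume_Ioc, hxy]
      · exact Eventually.of_forall (fun t => (gauss_pos t).le)
      · exact gauss_integrable.integrableOn
    linarith
  linarith [h1, h2, key]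

lemma gauss_tendsto_zero : Tendsto gauss atTop (nhds 0) := by
  rw [gauss_eq]
  have h1 : Tendsto (fun t : ℝ => -(1/2 : ℝ) * t ^ 2) atTop atBot := by
    apply Tendsto.const_mul_atTop_of_neg (by norm_num)
    exact tendsto_pow_atTop (by norm_num)
  exact Real.tendsto_exp_atBot.comp h1

lemma hasDerivAt_neg_gauss (t : ℝ) : HasDerivAt (fun t => -gauss t) (t * gauss t) t := by
  unfold gauss
  have h : HasDerivAt (fun t : ℝ => -t ^ 2 / 2) (-t) t := by
    have := ((hasDerivAt_pow 2 t).neg).div_const 2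
    refine this.congr_deriv ?_
    norm_num; ring
  have := (h.exp).neg
  refine this.congr_deriv ?_
  ring

lemma integral_mul_gauss_Ioi (x : ℝ) (hx : 0 < x) :
    ∫ t in Ioi x, t * gauss t = gauss x := by
  have := integral_Ioi_of_hasDerivAt_of_nonneg (g := fun t => -gauss t)
    (g' := fun t => t * gauss t) (a := x) (l := 0)
    (hasDerivAt_neg_gauss x).continuousAt.continuousWithinAt
    (fun t _ => hasDerivAt_neg_gauss t)
    (fun t ht => by exact mul_nonneg (le_of_lt (lt_trans hx ht)) (gauss_pos t).le)
    (by simpa using gauss_tendsto_zero.neg)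
  rw [this]
  simp


lemma integrableOn_mul_gauss (x : ℝ) (hx : 0 < x) :
    IntegrableOn (fun t => t * gauss t) (Ioi x) := by
  exact integrableOn_Ioi_deriv_of_nonneg
    (hasDerivAt_neg_gauss x).continuousAt.continuousWithinAt
    (fun t _ => hasDerivAt_neg_gauss t)
    (fun t ht => mul_nonneg (le_of_lt (lt_trans hx ht)) (gauss_pos t).le)
    (by simpa using gauss_tendsto_zero.neg)

lemma TT_upper (x : ℝ) (hx : 0 < x) : TT x ≤ CC * gauss x / x := by
  rw [TT]
  have h1 : ∫ t in Ioi x, gauss t ≤ ∫ t in Ioi x, t * gauss t / x := by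
    apply setIntegral_mono_on gauss_integrable.integrableOn
      ((integrableOn_mul_gauss x hx).div_const x) measurableSet_Ioi
    intro t ht
    rw [le_div_iff₀ hx]
    have h2 : x ≤ t := le_of_lt ht
    nlinarith [gauss_pos t]
  have h2 : ∫ t in Ioi x, t * gauss t / x = gauss x / x := by
    rw [integral_div, integral_mul_gauss_Ioi x hx]
  calc CC * ∫ t in Ioi x, gauss t ≤ CC * (gauss x / x) := by
        apply mul_le_mul_of_nonneg_left _ CC_pos.le
        rw [← h2]; exact h1
    _ = CC * gauss x / x := by ring

noncomputable def FF (t : ℝ) : ℝ := gauss t * t / (t ^ 2 + 1)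

noncomputable def mF (t : ℝ) : ℝ := gauss t * (t ^ 4 + 2 * t ^ 2 - 1) / (t ^ 2 + 1) ^ 2

lemma t_sq_add_one_pos (t : ℝ) : (0:ℝ) < t ^ 2 + 1 := by positivity

lemma hasDerivAt_neg_FF (t : ℝ) : HasDerivAt (fun t => -FF t) (mF t) t := by
  have h1 : HasDerivAt gauss (-(t * gauss t)) t := by
    have := (hasDerivAt_neg_gauss t).neg
    simpa [Pi.neg_def] using this
  have h2 : HasDerivAt (fun t : ℝ => t / (t ^ 2 + 1))
      ((1 * (t ^ 2 + 1) - t * (2 * t)) / (t ^ 2 + 1) ^ 2) t := by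
    exact (hasDerivAt_id t).div ((hasDerivAt_pow 2 t).add_const 1 |>.congr_deriv (by simp))
      (t_sq_add_one_pos t).ne'
  have h3 := (h1.mul h2).neg
  have heq : (fun t => -FF t) = fun t : ℝ => -(gauss t * (t / (t ^ 2 + 1))) := by
    funext t; unfold FF; ring
  rw [heq]
  refine h3.congr_deriv ?_
  unfold mF
  have hne := (t_sq_add_one_pos t).ne'
  field_simp
  ring

lemma mF_abs_le (t : ℝ) : |mF t| ≤ gauss t := by
  unfold mF
  rw [abs_div, abs_mul, abs_of_pos (gauss_pos t), abs_of_pos (pow_pos (t_sq_add_one_pos t) 2)]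
  rw [div_le_iff₀ (pow_pos (t_sq_add_one_pos t) 2)]
  have h1 : |t ^ 4 + 2 * t ^ 2 - 1| ≤ (t ^ 2 + 1) ^ 2 := by
    rw [abs_le]; constructor <;> nlinarith [sq_nonneg t, sq_nonneg (t^2)]
  nlinarith [gauss_pos t, abs_nonneg (t ^ 4 + 2 * t ^ 2 - 1)]

lemma mF_cont : Continuous mF := by
  unfold mF
  apply Continuous.div
  · exact gauss_cont.mul (by continuity)
  · continuity
  · exact fun t => (pow_pos (t_sq_add_one_pos t) 2).ne'

lemma mF_integrableOn (x : ℝ) : IntegrableOn mF (Ioi x) := by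
  apply Integrable.integrableOn
  apply gauss_integrable.mono mF_cont.aestronglyMeasurable
  apply Eventually.of_forall
  intro t
  rw [Real.norm_eq_abs, Real.norm_eq_abs, abs_of_pos (gauss_pos t)]
  exact mF_abs_le t

lemma FF_tendsto_zero : Tendsto (fun t => -FF t) atTop (nhds 0) := by
  apply squeeze_zero_norm _ gauss_tendsto_zero
  intro t
  rw [norm_neg, Real.norm_eq_abs]
  unfold FF
  rw [abs_div, abs_mul, abs_of_pos (gauss_pos t), abs_of_pos (t_sq_add_one_pos t)]
  rw [div_le_iff₀ (t_sq_add_one_pos t)]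
  nlinarith [gauss_pos t, abs_nonneg t, sq_abs t, abs_nonneg t, sq_nonneg (|t| - 1)]

lemma integral_mF (x : ℝ) : ∫ t in Ioi x, mF t = FF x := by
  have := integral_Ioi_of_hasDerivAt_of_tendsto (f := fun t => -FF t) (f' := mF) (a := x) (m := 0)
    (hasDerivAt_neg_FF x).continuousAt.continuousWithinAt
    (fun t _ => hasDerivAt_neg_FF t)
    (mF_integrableOn x)
    FF_tendsto_zero
  rw [this]; ring

lemma TT_lower (x : ℝ) (hx : 0 < x) : CC * gauss x * x / (x ^ 2 + 1) ≤ TT x := by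
  rw [TT]
  have h1 : ∫ t in Ioi x, mF t ≤ ∫ t in Ioi x, gauss t := by
    apply setIntegral_mono_on (mF_integrableOn x) gauss_integrable.integrableOn measurableSet_Ioi
    intro t _
    exact le_trans (le_abs_self _) (mF_abs_le t)
  rw [integral_mF] at h1
  unfold FF at h1
  calc CC * gauss x * x / (x ^ 2 + 1) = CC * (gauss x * x / (x ^ 2 + 1)) := by ring
    _ ≤ CC * ∫ t in Ioi x, gauss t := mul_le_mul_of_nonneg_left h1 CC_pos.le

/-- The core expression whose limit we compute. -/
noncomputable def G (a b' z : ℝ) (s : ℝ) : ℝ :=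
  (a * (CC * gauss (s * a - z)) + b' * (CC * gauss (s * b' + z))) /
    (s * (TT (s * a - z) + TT (s * b' + z)))

lemma one_div_tendsto_zero {f : ℝ → ℝ} (h : Tendsto f atTop atTop) :
    Tendsto (fun x => 1 / f x) atTop (nhds 0) := by
  have h4 := h.inv_tendsto_atTop
  have he : (fun x : ℝ => 1 / f x) = f⁻¹ := by funext s; simp [Pi.inv_apply, one_div]
  rw [he]; exact h4

lemma core_le (a b' z : ℝ) (ha : 0 < a) (hab : a ≤ b') :
    Tendsto (G a b' z) atTop (nhds (a ^ 2)) := by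
  have hb : 0 < b' := lt_of_lt_of_le ha hab
  -- lower bound function
  set glo : ℝ → ℝ := fun s => a ^ 2 - a * |z| / s with hglo
  have hglo_tendsto : Tendsto glo atTop (nhds (a ^ 2)) := by
    have h1 : Tendsto (fun s : ℝ => a * |z| / s) atTop (nhds 0) :=
      tendsto_const_nhds.div_atTop tendsto_id
    have := tendsto_const_nhds.sub h1 (a := a ^ 2)
    simpa using this
  -- the common lower bound (valid for both cases)
  have hlow : ∀ᶠ s in atTop, glo s ≤ G a b' z s := by
    filter_upwards [eventually_ge_atTop (max 1 ((1 + |z|) / a))] with s hs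
    have hs1 : (1:ℝ) ≤ s := le_trans (le_max_left _ _) hs
    have hs0 : (0:ℝ) < s := lt_of_lt_of_le one_pos hs1
    have hsz : (1 + |z|) / a ≤ s := le_trans (le_max_right _ _) hs
    have hsa : 1 + |z| ≤ s * a := by
      rw [div_le_iff₀ ha] at hsz; linarith
    set u := s * a - z with hu
    set v := s * b' + z with hv
    have hM : (1:ℝ) ≤ s * a - |z| := by linarith
    have hu1 : 1 ≤ u := by
      rw [hu]; have := le_abs_self z; linarith
    have hv1 : 1 ≤ v := by
      have h2 : s * a ≤ s * b' := by nlinarith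
      have := neg_abs_le z; rw [hv]; nlinarith
    have hu0 : 0 < u := lt_of_lt_of_le one_pos hu1
    have hv0 : 0 < v := lt_of_lt_of_le one_pos hv1
    set wu := CC * gauss u with hwu
    set wv := CC * gauss v with hwv
    have hwu0 : 0 < wu := mul_pos CC_pos (gauss_pos u)
    have hwv0 : 0 < wv := mul_pos CC_pos (gauss_pos v)
    have hTu : TT u * u ≤ wu := by
      have := TT_upper u hu0
      rw [← le_div_iff₀ hu0]; exact this
    have hTv : TT v * v ≤ wv := by
      have := TT_upper v hv0
      rw [← le_div_iff₀ hv0]; exact this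
    have hTu0 : 0 < TT u := TT_pos u
    have hTv0 : 0 < TT v := TT_pos v
    have hD0 : 0 < s * (TT u + TT v) := by positivity
    rw [hglo]
    unfold G
    rw [← hu, ← hv, ← hwu, ← hwv]
    rw [le_div_iff₀ hD0]
    -- (a^2 - a|z|/s) * (s * (TT u + TT v)) ≤ a * wu + b' * wv
    have key : (a ^ 2 - a * |z| / s) * s = a * (s * a - |z|) := by
      field_simp
    have hMu : s * a - |z| ≤ u := by have := le_abs_self z; rw [hu]; linarith
    have hMv : s * a - |z| ≤ v := by
      have h2 : s * a ≤ s * b' := by nlinarith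
      have := neg_abs_le z; rw [hv]; linarith
    -- TT u * (s*a - |z|) ≤ TT u * u ≤ wu
    have h3 : TT u * (s * a - |z|) ≤ wu := le_trans (by nlinarith) hTu
    have h4 : TT v * (s * a - |z|) ≤ wv := le_trans (by nlinarith) hTv
    calc (a ^ 2 - a * |z| / s) * (s * (TT u + TT v))
        = a * ((s * a - |z|) * (TT u + TT v)) := by
          rw [show (a ^ 2 - a * |z| / s) * (s * (TT u + TT v))
            = ((a ^ 2 - a * |z| / s) * s) * (TT u + TT v) by ring, key]; ring
      _ ≤ a * (wu + wv) := by
          apply mul_le_mul_of_nonneg_left _ ha.le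
          calc (s * a - |z|) * (TT u + TT v)
              = TT u * (s * a - |z|) + TT v * (s * a - |z|) := by ring
            _ ≤ wu + wv := add_le_add h3 h4
      _ ≤ a * wu + b' * wv := by nlinarith
  rcases eq_or_lt_of_le hab with heq | hlt
  · -- case a = b'
    subst heq
    set gup : ℝ → ℝ := fun s => a * (a + |z| / s + 1 / (s * (s * a + |z|))) with hgup
    have hgup_tendsto : Tendsto gup atTop (nhds (a ^ 2)) := by
      have h1 : Tendsto (fun s : ℝ => |z| / s) atTop (nhds 0) :=
        tendsto_const_nhds.div_atTop tendsto_id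
      have h2 : Tendsto (fun s : ℝ => s * a + |z|) atTop atTop :=
        tendsto_atTop_add_const_right _ _ (tendsto_id.atTop_mul_const ha)
      have h3 : Tendsto (fun s : ℝ => s * (s * a + |z|)) atTop atTop :=
        tendsto_id.atTop_mul_atTop₀ h2
      have h4 : Tendsto (fun s : ℝ => 1 / (s * (s * a + |z|))) atTop (nhds 0) :=
        one_div_tendsto_zero h3
      have h5 : Tendsto (fun s : ℝ => a * (a + |z| / s + 1 / (s * (s * a + |z|)))) atTop
          (nhds (a * (a + 0 + 0))) :=
        tendsto_const_nhds.mul ((tendsto_const_nhds.add h1).add h4)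
      rw [hgup]
      convert h5 using 2
      ring
    have hup : ∀ᶠ s in atTop, G a a z s ≤ gup s := by
      filter_upwards [eventually_ge_atTop (max 1 ((1 + |z|) / a))] with s hs
      have hs1 : (1:ℝ) ≤ s := le_trans (le_max_left _ _) hs
      have hs0 : (0:ℝ) < s := lt_of_lt_of_le one_pos hs1
      have hsz : (1 + |z|) / a ≤ s := le_trans (le_max_right _ _) hs
      have hsa : 1 + |z| ≤ s * a := by
        rw [div_le_iff₀ ha] at hsz; linarith
      set u := s * a - z with hu
      set v := s * a + z with hv
      set P := s * a + |z| with hP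
      have hu1 : 1 ≤ u := by rw [hu]; have := le_abs_self z; linarith
      have hv1 : 1 ≤ v := by rw [hv]; have := neg_abs_le z; linarith
      have hP1 : 1 ≤ P := by rw [hP]; have := abs_nonneg z; linarith
      have hu0 : 0 < u := lt_of_lt_of_le one_pos hu1
      have hv0 : 0 < v := lt_of_lt_of_le one_pos hv1
      have hP0 : 0 < P := lt_of_lt_of_le one_pos hP1
      have hPu : u ≤ P := by rw [hu, hP]; have := neg_abs_le z; linarith
      have hPv : v ≤ P := by rw [hv, hP]; have := le_abs_self z; linarith
      set wu := CC * gauss u with hwu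
      set wv := CC * gauss v with hwv
      have hwu0 : 0 < wu := mul_pos CC_pos (gauss_pos u)
      have hwv0 : 0 < wv := mul_pos CC_pos (gauss_pos v)
      have hTu0 : 0 < TT u := TT_pos u
      have hTv0 : 0 < TT v := TT_pos v
      have hu2 : (0:ℝ) < u ^ 2 + 1 := by positivity
      have hv2 : (0:ℝ) < v ^ 2 + 1 := by positivity
      have hTu' : wu * u ≤ TT u * (u ^ 2 + 1) := by
        have := TT_lower u hu0
        rw [div_le_iff₀ hu2] at this
        calc wu * u = CC * gauss u * u := by rw [hwu]
          _ ≤ TT u * (u ^ 2 + 1) := this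
      have hTv' : wv * v ≤ TT v * (v ^ 2 + 1) := by
        have := TT_lower v hv0
        rw [div_le_iff₀ hv2] at this
        calc wv * v = CC * gauss v * v := by rw [hwv]
          _ ≤ TT v * (v ^ 2 + 1) := this
      have key1 : wu * P ≤ TT u * (P ^ 2 + 1) := by
        have hfac : 0 ≤ (P - u) * (u * P - 1) :=
          mul_nonneg (by linarith) (by nlinarith)
        have hcross : P * (u ^ 2 + 1) ≤ u * (P ^ 2 + 1) := by nlinarith
        have c1 : wu * P * (u ^ 2 + 1) ≤ TT u * (P ^ 2 + 1) * (u ^ 2 + 1) := by nlinarith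
        exact le_of_mul_le_mul_right c1 hu2
      have key2 : wv * P ≤ TT v * (P ^ 2 + 1) := by
        have hfac : 0 ≤ (P - v) * (v * P - 1) :=
          mul_nonneg (by linarith) (by nlinarith)
        have hcross : P * (v ^ 2 + 1) ≤ v * (P ^ 2 + 1) := by nlinarith
        have c1 : wv * P * (v ^ 2 + 1) ≤ TT v * (P ^ 2 + 1) * (v ^ 2 + 1) := by nlinarith
        exact le_of_mul_le_mul_right c1 hv2
      have hD0 : 0 < s * (TT u + TT v) := by positivity
      have hsP0 : 0 < s * P := by positivity
      have hgid : gup s = a * (P ^ 2 + 1) / (s * P) := by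
        rw [hgup, hP]
        field_simp
      unfold G
      rw [← hu, ← hv, ← hwu, ← hwv, hgid, div_le_div_iff₀ hD0 hsP0]
      nlinarith [mul_le_mul_of_nonneg_left (add_le_add key1 key2)
        (mul_nonneg ha.le hs0.le)]
    exact tendsto_of_tendsto_of_tendsto_of_le_of_le' hglo_tendsto hgup_tendsto hlow hup
  · -- case a < b'
    set gup : ℝ → ℝ := fun s => (a + b' * Real.exp ((s * a - z) ^ 2 / 2 - (s * b' + z) ^ 2 / 2)) *
      (a - z / s + 1 / (s * (s * a - z))) with hgup
    have hgup_tendsto : Tendsto gup atTop (nhds (a ^ 2)) := by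
      have hq : (fun s : ℝ => (s * a - z) ^ 2 / 2 - (s * b' + z) ^ 2 / 2)
          = fun s : ℝ => s * ((a ^ 2 - b' ^ 2) * s + -(2 * z * (a + b'))) / 2 := by
        funext s; ring
      have hinner : Tendsto (fun s : ℝ => (a ^ 2 - b' ^ 2) * s + -(2 * z * (a + b'))) atTop atBot := by
        apply tendsto_atBot_add_const_right
        apply Tendsto.const_mul_atTop_of_neg _ tendsto_id
        nlinarith
      have hq2 : Tendsto (fun s : ℝ => s * ((a ^ 2 - b' ^ 2) * s + -(2 * z * (a + b'))) / 2)
          atTop atBot := (tendsto_id.atTop_mul_atBot₀ hinner).atBot_div_const (by norm_num)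
      have hexp : Tendsto (fun s : ℝ => Real.exp ((s * a - z) ^ 2 / 2 - (s * b' + z) ^ 2 / 2))
          atTop (nhds 0) := by
        have hq' : (fun s : ℝ => Real.exp ((s * a - z) ^ 2 / 2 - (s * b' + z) ^ 2 / 2))
            = fun s : ℝ => Real.exp (s * ((a ^ 2 - b' ^ 2) * s + -(2 * z * (a + b'))) / 2) := by
          funext s; congr 1; ring
        rw [hq']
        exact Real.tendsto_exp_atBot.comp hq2
      have h1 : Tendsto (fun s : ℝ => z / s) atTop (nhds 0) :=
        tendsto_const_nhds.div_atTop tendsto_id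
      have h2 : Tendsto (fun s : ℝ => s * a - z) atTop atTop := by
        have := tendsto_atTop_add_const_right atTop (-z) (tendsto_id.atTop_mul_const ha)
        simpa [sub_eq_add_neg] using this
      have h3 : Tendsto (fun s : ℝ => 1 / (s * (s * a - z))) atTop (nhds 0) :=
        one_div_tendsto_zero (tendsto_id.atTop_mul_atTop₀ h2)
      have h5 : Tendsto (fun s : ℝ =>
          (a + b' * Real.exp ((s * a - z) ^ 2 / 2 - (s * b' + z) ^ 2 / 2)) *
          (a - z / s + 1 / (s * (s * a - z)))) atTop
          (nhds ((a + b' * 0) * (a - 0 + 0))) :=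
        (tendsto_const_nhds.add (hexp.const_mul b')).mul
          ((tendsto_const_nhds.sub h1).add h3)
      rw [hgup]
      convert h5 using 2
      ring
    have hup : ∀ᶠ s in atTop, G a b' z s ≤ gup s := by
      filter_upwards [eventually_ge_atTop (max 1 ((1 + |z|) / a))] with s hs
      have hs1 : (1:ℝ) ≤ s := le_trans (le_max_left _ _) hs
      have hs0 : (0:ℝ) < s := lt_of_lt_of_le one_pos hs1
      have hsz : (1 + |z|) / a ≤ s := le_trans (le_max_right _ _) hs
      have hsa : 1 + |z| ≤ s * a := by
        rw [div_le_iff₀ ha] at hsz; linarith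
      set u := s * a - z with hu
      set v := s * b' + z with hv
      have hu1 : 1 ≤ u := by rw [hu]; have := le_abs_self z; linarith
      have hv1 : 1 ≤ v := by
        have h2 : s * a ≤ s * b' := by nlinarith
        have := neg_abs_le z; rw [hv]; nlinarith
      have hu0 : 0 < u := lt_of_lt_of_le one_pos hu1
      have hv0 : 0 < v := lt_of_lt_of_le one_pos hv1
      set wu := CC * gauss u with hwu
      set wv := CC * gauss v with hwv
      have hwu0 : 0 < wu := mul_pos CC_pos (gauss_pos u)
      have hwv0 : 0 < wv := mul_pos CC_pos (gauss_pos v)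
      have hTu0 : 0 < TT u := TT_pos u
      have hTv0 : 0 < TT v := TT_pos v
      have hu2 : (0:ℝ) < u ^ 2 + 1 := by positivity
      have hTu' : wu * u ≤ TT u * (u ^ 2 + 1) := by
        have := TT_lower u hu0
        rw [div_le_iff₀ hu2] at this
        calc wu * u = CC * gauss u * u := by rw [hwu]
          _ ≤ TT u * (u ^ 2 + 1) := this
      set r := Real.exp (u ^ 2 / 2 - v ^ 2 / 2) with hr
      have hr0 : 0 < r := Real.exp_pos _
      have hwvr : wv = wu * r := by
        rw [hwu, hwv, hr]
        unfold gauss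
        rw [mul_assoc, ← Real.exp_add]
        congr 2
        ring
      have hD0 : 0 < s * (TT u + TT v) := by positivity
      have hsu0 : 0 < s * u := by positivity
      have hgid : gup s = (a + b' * r) * (u ^ 2 + 1) / (s * u) := by
        rw [hgup, hr, hu, hv]
        field_simp
      unfold G
      rw [← hu, ← hv, ← hwu, ← hwv, hgid, div_le_div_iff₀ hD0 hsu0]
      have habr : 0 < a + b' * r := by positivity
      rw [hwvr]
      nlinarith [mul_le_mul_of_nonneg_left hTu' (mul_nonneg habr.le hs0.le),
        mul_pos (mul_pos habr hs0) (mul_pos hTv0 hu2)]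
    exact tendsto_of_tendsto_of_tendsto_of_le_of_le' hglo_tendsto hgup_tendsto hlow hup

lemma core (a b' z : ℝ) (ha : 0 < a) (hb : 0 < b') :
    Tendsto (G a b' z) atTop (nhds (min a b' ^ 2)) := by
  rcases le_total a b' with h | h
  · rw [min_eq_left h]; exact core_le a b' z ha h
  · rw [min_eq_right h]
    have h2 := core_le b' a (-z) hb h
    have heq : G a b' z = G b' a (-z) := by
      funext s
      unfold G
      simp only [sub_eq_add_neg, neg_neg]
      ring_nf
    rw [heq]
    exact h2

lemma tendsto_sqrt_atTop : Tendsto Real.sqrt atTop atTop := by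
  rw [tendsto_atTop_atTop]
  intro b
  refine ⟨(max b 0) ^ 2, fun x hx => ?_⟩
  have h1 : Real.sqrt ((max b 0) ^ 2) ≤ Real.sqrt x := Real.sqrt_le_sqrt hx
  rw [Real.sqrt_sq (le_max_right b 0)] at h1
  exact le_trans (le_max_left b 0) h1

lemma gauss_le_one (t : ℝ) : gauss t ≤ 1 := by
  unfold gauss
  rw [Real.exp_le_one_iff]
  nlinarith [sq_nonneg t]

lemma TT_tendsto_zero : Tendsto TT atTop (nhds 0) := by
  have hbd : ∀ᶠ x : ℝ in atTop, ‖TT x‖ ≤ CC / x := by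
    filter_upwards [eventually_ge_atTop (1:ℝ)] with x hx
    have hx0 : (0:ℝ) < x := lt_of_lt_of_le one_pos hx
    rw [Real.norm_eq_abs, abs_of_pos (TT_pos x)]
    calc TT x ≤ CC * gauss x / x := TT_upper x hx0
      _ ≤ CC / x := by
          rw [div_le_div_iff₀ hx0 hx0]
          nlinarith [mul_nonneg (mul_pos CC_pos hx0).le (sub_nonneg.mpr (gauss_le_one x))]
  exact squeeze_zero_norm' hbd (tendsto_const_nhds.div_atTop tendsto_id)

lemma hasDerivAt_logit {y : ℝ} (h0 : 0 < y) (h1 : y < 1) :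
    HasDerivAt logit (1 / y + 1 / (1 - y)) y := by
  have hy1 : (0:ℝ) < 1 - y := by linarith
  have hlog1 : HasDerivAt Real.log y⁻¹ y := Real.hasDerivAt_log h0.ne'
  have hin : HasDerivAt (fun x : ℝ => 1 - x) (-1) y := by
    simpa [Pi.sub_def] using (hasDerivAt_const y (1:ℝ)).sub (hasDerivAt_id y)
  have hlog2 : HasDerivAt (fun x : ℝ => Real.log (1 - x)) ((1 - y)⁻¹ * -1) y :=
    (Real.hasDerivAt_log hy1.ne').comp y hin
  have := hlog1.sub hlog2
  have heq : (fun x => Real.log x - Real.log (1 - x)) = logit := by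
    funext x; rw [logit]
  rw [← heq]
  refine this.congr_deriv ?_
  field_simp
  ring


lemma main_aux (a b' z Λ : ℝ) (ha : 0 < a) (hb : 0 < b') (hΛ : 0 < Λ) :
    Tendsto (deriv (fun c : ℝ => logit
      (Phi (Real.sqrt (c / Λ) * a - z) - Phi (Real.sqrt (c / Λ) * (-b') - z))))
      atTop (nhds (min a b' ^ 2 * (1 / (2 * Λ)))) := by
  set T : ℝ → ℝ := fun c =>
    Phi (Real.sqrt (c / Λ) * a - z) - Phi (Real.sqrt (c / Λ) * (-b') - z) with hTdef
  set D : ℝ → ℝ := fun c =>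
    CC * gauss (Real.sqrt (c / Λ) * a - z) * (1 / (2 * Real.sqrt (c / Λ)) * (1 / Λ) * a)
    - CC * gauss (Real.sqrt (c / Λ) * (-b') - z) *
        (1 / (2 * Real.sqrt (c / Λ)) * (1 / Λ) * (-b')) with hDdef
  have hs_top : Tendsto (fun c : ℝ => Real.sqrt (c / Λ)) atTop atTop :=
    tendsto_sqrt_atTop.comp (tendsto_id.atTop_div_const hΛ)
  have hs0 : ∀ c : ℝ, 0 < c → 0 < Real.sqrt (c / Λ) :=
    fun c hc => Real.sqrt_pos.mpr (div_pos hc hΛ)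
  -- derivative of T
  have hdT : ∀ c : ℝ, 0 < c → HasDerivAt T (D c) c := by
    intro c hc
    have hders : HasDerivAt (fun c : ℝ => Real.sqrt (c / Λ))
        (1 / (2 * Real.sqrt (c / Λ)) * (1 / Λ)) c := by
      have h1 : HasDerivAt (fun c : ℝ => c / Λ) (1 / Λ) c := by
        simpa using (hasDerivAt_id c).div_const Λ
      exact (Real.hasDerivAt_sqrt (div_pos hc hΛ).ne').comp c h1
    have hu : HasDerivAt (fun c : ℝ => Real.sqrt (c / Λ) * a - z)
        (1 / (2 * Real.sqrt (c / Λ)) * (1 / Λ) * a) c := (hders.mul_const a).sub_const z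
    have hv : HasDerivAt (fun c : ℝ => Real.sqrt (c / Λ) * (-b') - z)
        (1 / (2 * Real.sqrt (c / Λ)) * (1 / Λ) * (-b')) c := (hders.mul_const (-b')).sub_const z
    have h1 := (hasDerivAt_Phi (Real.sqrt (c / Λ) * a - z)).comp c hu
    have h2 := (hasDerivAt_Phi (Real.sqrt (c / Λ) * (-b') - z)).comp c hv
    have := h1.sub h2
    rw [hTdef, hDdef]
    exact this
  -- T is in (0,1)
  have hT01 : ∀ c : ℝ, 0 < c → 0 < T c ∧ T c < 1 := by
    intro c hc
    have hlt : Real.sqrt (c / Λ) * (-b') - z < Real.sqrt (c / Λ) * a - z := by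
      have := hs0 c hc
      have : Real.sqrt (c / Λ) * (-b') < Real.sqrt (c / Λ) * a := by nlinarith
      linarith
    have h1 := Phi_strictMono hlt
    have h2 := Phi_lt_one (Real.sqrt (c / Λ) * a - z)
    have h3 := Phi_pos (Real.sqrt (c / Λ) * (-b') - z)
    simp only [hTdef]
    constructor <;> [linarith; linarith]
  -- eventual formula for the derivative
  have hev : (deriv (fun c : ℝ => logit
      (Phi (Real.sqrt (c / Λ) * a - z) - Phi (Real.sqrt (c / Λ) * (-b') - z))))
      =ᶠ[atTop] fun c => D c / (1 - T c) + D c * (1 / T c) := by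
    filter_upwards [eventually_gt_atTop (0:ℝ)] with c hc
    have hF : HasDerivAt (fun c : ℝ => logit
        (Phi (Real.sqrt (c / Λ) * a - z) - Phi (Real.sqrt (c / Λ) * (-b') - z)))
        ((1 / T c + 1 / (1 - T c)) * D c) c :=
      (hasDerivAt_logit (hT01 c hc).1 (hT01 c hc).2).comp c (hdT c hc)
    rw [hF.deriv]
    ring
  -- identity: 1 - T = TT + TT
  have hone_sub : ∀ c : ℝ, 1 - T c
      = TT (Real.sqrt (c / Λ) * a - z) + TT (Real.sqrt (c / Λ) * b' + z) := by
    intro c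
    simp only [hTdef]
    have h1 : Real.sqrt (c / Λ) * (-b') - z = -(Real.sqrt (c / Λ) * b' + z) := by ring
    rw [h1, Phi_neg]
    have := Phi_add_TT (Real.sqrt (c / Λ) * a - z)
    linarith
  -- relation with G
  have hDG : ∀ c : ℝ, 0 < c → D c / (1 - T c)
      = G a b' z (Real.sqrt (c / Λ)) * (1 / (2 * Λ)) := by
    intro c hc
    rw [hone_sub c]
    simp only [hDdef]
    unfold G
    have hsc := hs0 c hc
    have hgeq : gauss (Real.sqrt (c / Λ) * (-b') - z) = gauss (Real.sqrt (c / Λ) * b' + z) := by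
      rw [show Real.sqrt (c / Λ) * (-b') - z = -(Real.sqrt (c / Λ) * b' + z) by ring, gauss_even]
    rw [hgeq]
    have hTT0 : 0 < TT (Real.sqrt (c / Λ) * a - z) + TT (Real.sqrt (c / Λ) * b' + z) :=
      add_pos (TT_pos _) (TT_pos _)
    field_simp
    ring
  -- Tendsto of the main term
  have T2 : Tendsto (fun c : ℝ => D c / (1 - T c)) atTop
      (nhds (min a b' ^ 2 * (1 / (2 * Λ)))) := by
    have hG : Tendsto (fun c : ℝ => G a b' z (Real.sqrt (c / Λ)) * (1 / (2 * Λ))) atTop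
        (nhds (min a b' ^ 2 * (1 / (2 * Λ)))) :=
      (Tendsto.comp (core a b' z ha hb) hs_top).mul_const _
    apply hG.congr'
    filter_upwards [eventually_gt_atTop (0:ℝ)] with c hc
    exact (hDG c hc).symm
  -- Tendsto D → 0
  have hD0 : Tendsto D atTop (nhds 0) := by
    have hbd : ∀ᶠ c : ℝ in atTop,
        ‖D c‖ ≤ 1 / (2 * Real.sqrt (c / Λ) * Λ) * (CC * (a + b')) := by
      filter_upwards [eventually_gt_atTop (0:ℝ)] with c hc
      have hsc := hs0 c hc
      simp only [hDdef]
      rw [Real.norm_eq_abs]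
      have hg1 := gauss_le_one (Real.sqrt (c / Λ) * a - z)
      have hg2 := gauss_le_one (Real.sqrt (c / Λ) * (-b') - z)
      have hg1' := gauss_pos (Real.sqrt (c / Λ) * a - z)
      have hg2' := gauss_pos (Real.sqrt (c / Λ) * (-b') - z)
      have hk : (0:ℝ) < 1 / (2 * Real.sqrt (c / Λ)) * (1 / Λ) := by positivity
      rw [abs_le]
      have hkk : 1 / (2 * Real.sqrt (c / Λ) * Λ) = 1 / (2 * Real.sqrt (c / Λ)) * (1 / Λ) := by
        field_simp
      rw [hkk]
      constructor <;> nlinarith [CC_pos, mul_pos hk (mul_pos CC_pos hg1'),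
        mul_pos hk (mul_pos CC_pos hg2'),
        mul_le_mul_of_nonneg_left hg1 (mul_nonneg hk.le CC_pos.le),
        mul_le_mul_of_nonneg_left hg2 (mul_nonneg hk.le CC_pos.le)]
    have hbt : Tendsto (fun c : ℝ => 2 * Real.sqrt (c / Λ) * Λ) atTop atTop :=
      (hs_top.const_mul_atTop two_pos).atTop_mul_const hΛ
    have h0 : Tendsto (fun c : ℝ => 1 / (2 * Real.sqrt (c / Λ) * Λ) * (CC * (a + b'))) atTop
        (nhds (0 * (CC * (a + b')))) := (one_div_tendsto_zero hbt).mul_const _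
    rw [zero_mul] at h0
    exact squeeze_zero_norm' hbd h0
  -- Tendsto T → 1
  have hT1 : Tendsto T atTop (nhds 1) := by
    have hu_top : Tendsto (fun c : ℝ => Real.sqrt (c / Λ) * a - z) atTop atTop := by
      have := tendsto_atTop_add_const_right atTop (-z) (hs_top.atTop_mul_const ha)
      simpa [sub_eq_add_neg] using this
    have hv_top : Tendsto (fun c : ℝ => Real.sqrt (c / Λ) * b' + z) atTop atTop :=
      tendsto_atTop_add_const_right atTop z (hs_top.atTop_mul_const hb)
    have hTT : Tendsto (fun c : ℝ => TT (Real.sqrt (c / Λ) * a - z)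
        + TT (Real.sqrt (c / Λ) * b' + z)) atTop (nhds 0) := by
      have := (TT_tendsto_zero.comp hu_top).add (TT_tendsto_zero.comp hv_top)
      simpa using this
    have h1 : Tendsto (fun c : ℝ => 1 - (TT (Real.sqrt (c / Λ) * a - z)
        + TT (Real.sqrt (c / Λ) * b' + z))) atTop (nhds (1 - 0)) :=
      tendsto_const_nhds.sub hTT
    rw [sub_zero] at h1
    apply h1.congr
    intro c
    have := hone_sub c
    linarith
  have T1 : Tendsto (fun c : ℝ => D c * (1 / T c)) atTop (nhds 0) := by
    have hinv : Tendsto (fun c : ℝ => 1 / T c) atTop (nhds 1) := by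
      have h := Tendsto.div (tendsto_const_nhds (x := (1:ℝ)) (f := atTop) (α := ℝ)) hT1 one_ne_zero
      rw [div_one] at h
      exact h
    have := hD0.mul hinv
    simpa using this
  have := T2.add T1
  rw [add_zero] at this
  exact Tendsto.congr' hev.symm this

theorem limiting_derivative_of_logit_proxy_interior
    (δL δU δ Λ z : ℝ) (hLU : δL < δU) (hL : δL < δ) (hU : δ < δU) (hΛ : 0 < Λ) :
    Tendsto
      (deriv (fun c : ℝ => logit
        (Phi (Real.sqrt (c / Λ) * (δU - δ) - z) - Phi (Real.sqrt (c / Λ) * (δL - δ) - z))))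
      atTop
      (nhds ((1 / 2) * min ((δU - δ) ^ 2) ((δL - δ) ^ 2) / Λ)) := by
  have ha : 0 < δU - δ := sub_pos.mpr hU
  have hb : 0 < δ - δL := sub_pos.mpr hL
  have hrw : δL - δ = -(δ - δL) := by ring
  rw [hrw]
  have h := main_aux (δU - δ) (δ - δL) z Λ ha hb hΛ
  have hval : min (δU - δ) (δ - δL) ^ 2 * (1 / (2 * Λ))
      = 1 / 2 * min ((δU - δ) ^ 2) ((-(δ - δL)) ^ 2) / Λ := by
    rw [show ((-(δ - δL)) : ℝ) ^ 2 = (δ - δL) ^ 2 by ring]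
    rcases le_total (δU - δ) (δ - δL) with hle | hle
    · rw [min_eq_left hle, min_eq_left (by nlinarith : (δU - δ) ^ 2 ≤ (δ - δL) ^ 2)]
      field_simp
    · rw [min_eq_right hle, min_eq_right (by nlinarith : (δ - δL) ^ 2 ≤ (δU - δ) ^ 2)]
      field_simp
  rw [← hval]
  exact h
end
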